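/- For every x > 0: if α ≥ 0 then ∫₀^∞ (μ(t;α)/β(t;α)) e^{−x/β(t;α)} dt = 2/x, and if α < 0 then ∫₀^∞ (μ(t;α)/β(t;α)) e^{−x/β(t;α)} dt = (2/x) e^{2αx}. (This integral evaluation is the content of Lemma 4: it shows that (x/2)(μ(t;|α|)/β(t;|α|)) e^{−x/β(t;|α|)} is the posterior density of the time T₁ since initiation from a single founder under an improper uniform prior on T₁, given current population x.) -/

import Mathlib

open MeasureTheory Real Filter Set

/-- `muF t α` is the function μ(t;α) = 2α e^{αt}/(e^{αt} − 1) for α ≠ 0, and 2/t for α = 0. -/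
noncomputable def muF (t α : ℝ) : ℝ :=
  if α = 0 then 2 / t else 2 * α * Real.exp (α * t) / (Real.exp (α * t) - 1)

/-- `betaF t α` is the function β(t;α) = (e^{αt} − 1)/(2α) for α ≠ 0, and t/2 for α = 0. -/
noncomputable def betaF (t α : ℝ) : ℝ :=
  if α = 0 then t / 2 else (Real.exp (α * t) - 1) / (2 * α)

lemma betaF_pos (α : ℝ) {t : ℝ} (ht : 0 < t) : 0 < betaF t α := by
  unfold betaF
  rcases eq_or_ne α 0 with h | h
  · rw [if_pos h]; linarith
  · rw [if_neg h]
    rcases lt_or_gt_of_ne h with hneg | hpos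
    · have h1 : Real.exp (α * t) < 1 := by
        rw [Real.exp_lt_one_iff]; exact mul_neg_of_neg_of_pos hneg ht
      apply div_pos_of_neg_of_neg <;> linarith
    · have h1 : 1 < Real.exp (α * t) := by
        rw [Real.one_lt_exp_iff]; positivity
      apply div_pos <;> linarith

lemma hasDerivAt_betaF (α t : ℝ) :
    HasDerivAt (fun s => betaF s α) (Real.exp (α * t) / 2) t := by
  rcases eq_or_ne α 0 with h | h
  · simp only [betaF, h, if_true, zero_mul, Real.exp_zero]
    simpa using (hasDerivAt_id t).div_const 2
  · have h1 : HasDerivAt (fun s => Real.exp (α * s)) (Real.exp (α * t) * α) t := by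
      simpa [Function.comp_def] using (Real.hasDerivAt_exp (α * t)).comp t ((hasDerivAt_id t).const_mul α)
    have h2 := (h1.sub_const 1).div_const (2 * α)
    have : Real.exp (α * t) * α / (2 * α) = Real.exp (α * t) / 2 := by
      field_simp
    rw [← this]
    simp only [betaF, if_neg h]
    exact h2

lemma muF_eq (α : ℝ) {t : ℝ} (ht : 0 < t) :
    muF t α = Real.exp (α * t) / betaF t α := by
  rcases eq_or_ne α 0 with h | h
  · simp only [muF, betaF, h, if_true, zero_mul, Real.exp_zero]
    rw [div_div_eq_mul_div, one_mul]
  · simp only [muF, betaF, if_neg h]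
    rw [div_div_eq_mul_div]
    ring

theorem stmt12 (α x : ℝ) (hx : 0 < x) :
    (0 ≤ α →
      ∫ t in Set.Ioi (0 : ℝ), (muF t α / betaF t α) * Real.exp (-(x / betaF t α)) = 2 / x) ∧
    (α < 0 →
      ∫ t in Set.Ioi (0 : ℝ), (muF t α / betaF t α) * Real.exp (-(x / betaF t α))
        = (2 / x) * Real.exp (2 * α * x)) := by
  have hx' : x ≠ 0 := ne_of_gt hx
  set F : ℝ → ℝ := fun t => if t ≤ 0 then 0 else (2 / x) * Real.exp (-(x / betaF t α)) with hF
  set g : ℝ → ℝ := fun t => (muF t α / betaF t α) * Real.exp (-(x / betaF t α)) with hg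
  -- derivative
  have hderiv : ∀ t ∈ Ioi (0 : ℝ), HasDerivAt F (g t) t := by
    intro t ht
    have ht : (0 : ℝ) < t := ht
    have hb := betaF_pos α ht
    have hb' := hasDerivAt_betaF α t
    have h1 : HasDerivAt (fun s => -(x / betaF s α))
        (-x * (-(Real.exp (α * t) / 2) / betaF t α ^ 2)) t := by
      simpa only [div_eq_mul_inv, neg_mul, Pi.inv_apply] using (hb'.inv hb.ne').const_mul (-x)
    have h2 := (h1.exp).const_mul (2 / x)
    have heq : F =ᶠ[nhds t] fun s => (2 / x) * Real.exp (-(x / betaF s α)) := by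
      filter_upwards [eventually_gt_nhds ht] with s hs
      simp only [hF, if_neg (not_le.mpr hs)]
    have h3 := h2.congr_of_eventuallyEq heq
    refine h3.congr_deriv ?_
    rw [hg]
    simp only
    rw [muF_eq α ht]
    field_simp
  -- nonnegativity
  have hnonneg : ∀ t ∈ Ioi (0 : ℝ), 0 ≤ g t := by
    intro t ht
    have ht : (0 : ℝ) < t := ht
    have hb := betaF_pos α ht
    rw [hg]
    simp only
    rw [muF_eq α ht]
    positivity
  -- continuity at 0 within Ici 0
  have hF0 : F 0 = 0 := by simp [hF]
  have hcont : ContinuousWithinAt F (Ici 0) 0 := by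
    rw [ContinuousWithinAt, hF0, ← Set.Ioi_union_left, nhdsWithin_union, tendsto_sup]
    constructor
    · have hbc : Tendsto (fun s => betaF s α) (nhdsWithin 0 (Ioi 0)) (nhdsWithin 0 (Ioi 0)) := by
        rw [tendsto_nhdsWithin_iff]
        constructor
        · have := (hasDerivAt_betaF α 0).continuousAt.tendsto
          have hb0 : betaF 0 α = 0 := by
            simp [betaF]
          rw [hb0] at this
          exact this.mono_left nhdsWithin_le_nhds
        · filter_upwards [self_mem_nhdsWithin] with s hs
          exact betaF_pos α hs
      have hdiv : Tendsto (fun s => x / betaF s α) (nhdsWithin 0 (Ioi 0)) atTop := by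
        have h1 : Tendsto (fun b : ℝ => x * b⁻¹) (nhdsWithin 0 (Ioi 0)) atTop :=
          (tendsto_inv_nhdsGT_zero).const_mul_atTop hx
        simpa only [div_eq_mul_inv, Function.comp_def] using h1.comp hbc
      have hexp : Tendsto (fun s => Real.exp (-(x / betaF s α))) (nhdsWithin 0 (Ioi 0)) (nhds 0) :=
        Real.tendsto_exp_atBot.comp (tendsto_neg_atTop_atBot.comp hdiv)
      have h2 : Tendsto (fun s => (2 / x) * Real.exp (-(x / betaF s α)))
          (nhdsWithin 0 (Ioi 0)) (nhds 0) := by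
        have := hexp.const_mul (2 / x)
        simpa using this
      refine h2.congr' ?_
      filter_upwards [self_mem_nhdsWithin] with s hs
      simp only [hF, if_neg (not_le.mpr (mem_Ioi.mp hs))]
    · rw [nhdsWithin_singleton]
      rw [tendsto_pure_left]
      intro s hs
      rw [hF0]
      exact mem_of_mem_nhds hs
  -- the two limits at infinity
  constructor
  · intro hα
    have hbtop : Tendsto (fun t => betaF t α) atTop atTop := by
      rcases eq_or_lt_of_le hα with h | h
      · simp only [betaF, ← h, if_true]
        exact tendsto_id.atTop_div_const two_pos
      · have h1 : Tendsto (fun t => Real.exp (α * t)) atTop atTop :=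
          Real.tendsto_exp_atTop.comp (tendsto_id.const_mul_atTop h)
        have h2 : Tendsto (fun t => Real.exp (α * t) - 1) atTop atTop := by
          simpa [sub_eq_add_neg] using tendsto_atTop_add_const_right atTop (-1 : ℝ) h1
        have h3 := h2.atTop_div_const (by linarith : (0:ℝ) < 2 * α)
        simpa only [betaF, if_neg (ne_of_gt h)] using h3
    have hdiv : Tendsto (fun t => x / betaF t α) atTop (nhds 0) :=
      Tendsto.div_atTop tendsto_const_nhds hbtop
    have hlim : Tendsto F atTop (nhds (2 / x)) := by
      have h3 : Tendsto (fun t => (2 / x) * Real.exp (-(x / betaF t α))) atTop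
          (nhds ((2 / x) * Real.exp (-0))) :=
        ((Real.continuous_exp.tendsto _).comp hdiv.neg).const_mul _
      rw [neg_zero, Real.exp_zero, mul_one] at h3
      refine h3.congr' ?_
      filter_upwards [eventually_gt_atTop (0 : ℝ)] with s hs
      simp only [hF, if_neg (not_le.mpr hs)]
    have key := integral_Ioi_of_hasDerivAt_of_nonneg hcont hderiv hnonneg hlim
    rw [hF0, sub_zero] at key
    exact key
  · intro hα
    have hα2 : (2 : ℝ) * α ≠ 0 := mul_ne_zero two_ne_zero (ne_of_lt hα)
    have hblim : Tendsto (fun t => betaF t α) atTop (nhds ((0 - 1) / (2 * α))) := by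
      have h0 : Tendsto (fun t => α * t) atTop atBot := by
        have h1 : Tendsto (fun t : ℝ => -α * t) atTop atTop :=
          tendsto_id.const_mul_atTop (by linarith : (0:ℝ) < -α)
        have h2 := tendsto_neg_atTop_atBot.comp h1
        have : (fun t : ℝ => -(-α * t)) = fun t => α * t := by funext t; ring
        rwa [show (Neg.neg ∘ fun t : ℝ => -α * t) = fun t : ℝ => α * t by funext t; simp]
          at h2
      have h1 := Real.tendsto_exp_atBot.comp h0
      have h2 : Tendsto (fun t => (Real.exp (α * t) - 1) / (2 * α)) atTop
          (nhds ((0 - 1) / (2 * α))) := (h1.sub_const 1).div_const _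
      simpa only [betaF, if_neg (ne_of_lt hα)] using h2
    have hne : (0 - 1) / (2 * α) ≠ 0 := by
      apply div_ne_zero _ hα2; norm_num
    have hdiv : Tendsto (fun t => x / betaF t α) atTop (nhds (x / ((0 - 1) / (2 * α)))) :=
      tendsto_const_nhds.div hblim hne
    have hlim : Tendsto F atTop (nhds ((2 / x) * Real.exp (2 * α * x))) := by
      have h3 : Tendsto (fun t => (2 / x) * Real.exp (-(x / betaF t α))) atTop
          (nhds ((2 / x) * Real.exp (-(x / ((0 - 1) / (2 * α)))))) :=
        ((Real.continuous_exp.tendsto _).comp hdiv.neg).const_mul _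
      have hval : -(x / ((0 - 1) / (2 * α))) = 2 * α * x := by
        field_simp
        ring
      rw [hval] at h3
      refine h3.congr' ?_
      filter_upwards [eventually_gt_atTop (0 : ℝ)] with s hs
      simp only [hF, if_neg (not_le.mpr hs)]
    have key := integral_Ioi_of_hasDerivAt_of_nonneg hcont hderiv hnonneg hlim
    rw [hF0, sub_zero] at key
    exact key
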